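/- arXiv:2103.11389 — 5 statements merged into one kernel-verified Lean document; each statement's English description precedes it below -/
import Mathlib

section
/- For a prime p with p = 4k + 1, the unique fixed point of the Zagier involution on S_p = {(x,y,z) ∈ ℕ³ | x² + 4yz = p} is the triple (1,1,k). -/
def zagier (t : ℕ × ℕ × ℕ) : ℕ × ℕ × ℕ :=
  match t with
  | (x, y, z) =>
    if x + z ≤ y then (x + 2 * z, z, y - x - z)
    else if 2 * y ≤ x then (x - 2 * y, x - y + z, y)
    else (2 * y - x, y, x - y + z)

theorem zagier_fixed_point (p k : ℕ) (hp : p.Prime) (hk : p = 4 * k + 1) :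
    ∀ t : ℕ × ℕ × ℕ,
      (t.1 ^ 2 + 4 * t.2.1 * t.2.2 = p ∧ zagier t = t) ↔ t = (1, 1, k) := by
  have hp2 := hp.two_le
  have hk1 : 1 ≤ k := by omega
  rintro ⟨x, y, z⟩
  constructor
  · rintro ⟨hs, hf⟩
    simp only at hs
    simp only [zagier] at hf
    split_ifs at hf with h1 h2 <;>
      simp only [Prod.mk.injEq] at hf ⊢ <;> obtain ⟨e1, e2, e3⟩ := hf
    · have hz : z = 0 := by omega
      have hy : y = 0 := by omega
      subst hz hy
      have hdvd : x ∣ p := ⟨x, by nlinarith⟩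
      rcases (hp.eq_one_or_self_of_dvd x hdvd) with h | h <;> subst h <;> nlinarith
    · have hy : y = 0 := by omega
      subst hy
      have hdvd : x ∣ p := ⟨x, by nlinarith⟩
      rcases (hp.eq_one_or_self_of_dvd x hdvd) with h | h <;> subst h <;> nlinarith
    · have hxy : x = y := by omega
      subst hxy
      have hdvd : x ∣ p := ⟨x + 4 * z, by nlinarith⟩
      rcases (hp.eq_one_or_self_of_dvd x hdvd) with h | h
      · subst h; refine ⟨rfl, rfl, by nlinarith⟩
      · subst h; nlinarith
  · rintro h
    rw [Prod.ext_iff, Prod.ext_iff] at h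
    obtain ⟨hx, hy, hz⟩ := h
    simp only at hx hy hz
    subst hx hy hz
    constructor
    · simp only; omega
    · simp only [zagier]
      rw [if_neg (by omega), if_neg (by omega)]
      norm_num
end

section
/- For a prime p ≡ 1 mod 4, the set S_p = {(x,y,z) ∈ ℕ³ | x² + 4yz = p} has odd cardinality. -/
/-- Zagier's involution on triples of naturals. -/
def zagMap (t : ℕ × ℕ × ℕ) : ℕ × ℕ × ℕ :=
  if t.1 + t.2.2 < t.2.1 then (t.1 + 2 * t.2.2, t.2.2, t.2.1 - t.1 - t.2.2)
  else if t.1 < 2 * t.2.1 then (2 * t.2.1 - t.1, t.2.1, t.1 + t.2.2 - t.2.1)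
  else (t.1 - 2 * t.2.1, t.1 + t.2.2 - t.2.1, t.2.1)

lemma zagMap_eq₁ {x y z : ℕ} (h : x + z < y) :
    zagMap (x, y, z) = (x + 2 * z, z, y - x - z) := by
  simp only [zagMap, if_pos h]

lemma zagMap_eq₂ {x y z : ℕ} (h : ¬ x + z < y) (h' : x < 2 * y) :
    zagMap (x, y, z) = (2 * y - x, y, x + z - y) := by
  simp only [zagMap]
  rw [if_neg h, if_pos h']

lemma zagMap_eq₃ {x y z : ℕ} (h : ¬ x + z < y) (h' : ¬ x < 2 * y) :
    zagMap (x, y, z) = (x - 2 * y, x + z - y, y) := by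
  simp only [zagMap]
  rw [if_neg h, if_neg h']

lemma zag_facts {p x y z : ℕ} (hp : p.Prime) (hmod : p % 4 = 1)
    (h : x ^ 2 + 4 * y * z = p) :
    1 ≤ x ∧ 1 ≤ y ∧ 1 ≤ z ∧ x ≠ 2 * y ∧ x + z ≠ y := by
  have hp2 := hp.two_le
  have hx : 1 ≤ x := by
    rcases Nat.eq_zero_or_pos x with rfl | h1
    · exfalso
      simp at h
      have h4 : 4 ∣ p := ⟨y * z, by rw [← h]; ring⟩
      omega
    · exact h1
  have hy : 1 ≤ y := by
    rcases Nat.eq_zero_or_pos y with rfl | h1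
    · exfalso
      simp at h
      have hd : x ∣ p := ⟨x, by nlinarith⟩
      rcases (Nat.Prime.eq_one_or_self_of_dvd hp x hd) with h2 | h2 <;> nlinarith
    · exact h1
  have hz : 1 ≤ z := by
    rcases Nat.eq_zero_or_pos z with rfl | h1
    · exfalso
      simp at h
      have hd : x ∣ p := ⟨x, by nlinarith⟩
      rcases (Nat.Prime.eq_one_or_self_of_dvd hp x hd) with h2 | h2 <;> nlinarith
    · exact h1
  refine ⟨hx, hy, hz, ?_, ?_⟩
  · intro he
    subst he
    have : 4 * (y * y + y * z) = p := by nlinarith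
    omega
  · intro he
    have hpe : p = (y + z) * (y + z) := by nlinarith
    have hd : (y + z) ∣ p := ⟨y + z, hpe⟩
    rcases (Nat.Prime.eq_one_or_self_of_dvd hp _ hd) with h2 | h2 <;> nlinarith

lemma zag_mem {p : ℕ} (hp : p.Prime) (hmod : p % 4 = 1) {t : ℕ × ℕ × ℕ}
    (h : t.1 ^ 2 + 4 * t.2.1 * t.2.2 = p) :
    (zagMap t).1 ^ 2 + 4 * (zagMap t).2.1 * (zagMap t).2.2 = p := by
  obtain ⟨x, y, z⟩ := t
  simp only at h
  obtain ⟨hx, hy, hz, hxy, hxyz⟩ := zag_facts hp hmod h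
  have hZ : (x : ℤ) ^ 2 + 4 * y * z = p := by exact_mod_cast h
  by_cases h1 : x + z < y
  · rw [zagMap_eq₁ h1]
    simp only
    zify [show x + z ≤ y by omega, show x ≤ y - z by omega, Nat.sub_sub]
    linear_combination hZ
  · by_cases h2 : x < 2 * y
    · rw [zagMap_eq₂ h1 h2]
      simp only
      zify [show x ≤ 2 * y by omega, show y ≤ x + z by omega]
      linear_combination hZ
    · rw [zagMap_eq₃ h1 h2]
      simp only
      zify [show 2 * y ≤ x by omega, show y ≤ x + z by omega]
      linear_combination hZ

lemma zag_zag {p : ℕ} (hp : p.Prime) (hmod : p % 4 = 1) {t : ℕ × ℕ × ℕ}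
    (h : t.1 ^ 2 + 4 * t.2.1 * t.2.2 = p) : zagMap (zagMap t) = t := by
  obtain ⟨x, y, z⟩ := t
  simp only at h
  obtain ⟨hx, hy, hz, hxy, hxyz⟩ := zag_facts hp hmod h
  by_cases h1 : x + z < y
  · rw [zagMap_eq₁ h1,
      zagMap_eq₃ (x := x + 2 * z) (y := z) (z := y - x - z) (by omega) (by omega)]
    simp only [Prod.mk.injEq, and_true, true_and]
    omega
  · by_cases h2 : x < 2 * y
    · rw [zagMap_eq₂ h1 h2,
        zagMap_eq₂ (x := 2 * y - x) (y := y) (z := x + z - y) (by omega) (by omega)]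
      simp only [Prod.mk.injEq, and_true, true_and]
      omega
    · rw [zagMap_eq₃ h1 h2,
        zagMap_eq₁ (x := x - 2 * y) (y := x + z - y) (z := y) (by omega)]
      simp only [Prod.mk.injEq, and_true, true_and]
      omega

lemma zag_fixed {p : ℕ} (hp : p.Prime) (hmod : p % 4 = 1) {t : ℕ × ℕ × ℕ}
    (h : t.1 ^ 2 + 4 * t.2.1 * t.2.2 = p) :
    (zagMap t = t ↔ t = (1, 1, (p - 1) / 4)) := by
  obtain ⟨x, y, z⟩ := t
  simp only at h
  obtain ⟨hx, hy, hz, hxy, hxyz⟩ := zag_facts hp hmod h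
  have hp2 := hp.two_le
  constructor
  · intro hf
    by_cases h1 : x + z < y
    · rw [zagMap_eq₁ h1] at hf
      simp only [Prod.mk.injEq] at hf
      omega
    · by_cases h2 : x < 2 * y
      · rw [zagMap_eq₂ h1 h2] at hf
        simp only [Prod.mk.injEq] at hf
        have hxy' : x = y := by omega
        subst hxy'
        have hd : x ∣ p := ⟨x + 4 * z, by nlinarith⟩
        rcases (Nat.Prime.eq_one_or_self_of_dvd hp x hd) with h3 | h3
        · subst h3
          have h5 : 1 + 4 * z = p := by nlinarith
          have hz4 : z = (p - 1) / 4 := by omega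
          rw [hz4]
        · exfalso; nlinarith
      · rw [zagMap_eq₃ h1 h2] at hf
        simp only [Prod.mk.injEq] at hf
        omega
  · intro hf
    obtain ⟨e1, e2, e3⟩ : x = 1 ∧ y = 1 ∧ z = (p - 1) / 4 := by
      simpa [Prod.ext_iff] using hf
    subst e1; subst e2; subst e3
    rw [zagMap_eq₂ (x := 1) (y := 1) (z := (p - 1) / 4) (by omega) (by omega)]
    simp only [Prod.mk.injEq, and_true, true_and]
    omega

lemma even_card_invol {α : Type*} [DecidableEq α] (f : α → α) (s : Finset α)
    (h1 : ∀ a ∈ s, f a ∈ s) (h2 : ∀ a ∈ s, f (f a) = a) (h3 : ∀ a ∈ s, f a ≠ a) :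
    Even s.card := by
  induction s using Finset.strongInduction with
  | _ s ih =>
    rcases s.eq_empty_or_nonempty with rfl | ⟨a, ha⟩
    · simp
    · have hfa := h1 a ha
      set t := s \ {a, f a} with ht
      have hsub : {a, f a} ⊆ s := by
        intro b hb
        simp only [Finset.mem_insert, Finset.mem_singleton] at hb
        rcases hb with rfl | rfl <;> assumption
      have hpair : ({a, f a} : Finset α).card = 2 := by
        have hne : a ∉ ({f a} : Finset α) := by
          simp only [Finset.mem_singleton]
          exact fun he => h3 a ha he.symm
        rw [Finset.card_insert_of_notMem hne, Finset.card_singleton]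
      have hcard : s.card = t.card + 2 := by
        rw [ht, Finset.card_sdiff_of_subset hsub, hpair]
        have := Finset.card_le_card hsub
        omega
      have ht_ss : t ⊂ s := by
        rw [ht]
        exact Finset.sdiff_ssubset hsub (by simp)
      have hts : t ⊆ s := ht_ss.subset
      have heven : Even t.card := by
        refine ih t ht_ss ?_ (fun b hb => h2 b (hts hb)) (fun b hb => h3 b (hts hb))
        intro b hb
        rw [ht] at hb ⊢
        simp only [Finset.mem_sdiff, Finset.mem_insert, Finset.mem_singleton] at hb ⊢
        obtain ⟨hbs, hb2⟩ := hb
        push_neg at hb2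
        refine ⟨h1 b hbs, ?_⟩
        push_neg
        refine ⟨?_, ?_⟩
        · intro he
          exact hb2.2 (by rw [← h2 b hbs, he])
        · intro he
          exact hb2.1 (by rw [← h2 b hbs, he, h2 a ha])
      rw [hcard]
      exact heven.add (by norm_num)

theorem Sp_odd_card (p : ℕ) (hp : p.Prime) (hmod : p % 4 = 1) :
    Odd {t : ℕ × ℕ × ℕ | t.1 ^ 2 + 4 * t.2.1 * t.2.2 = p}.ncard := by
  classical
  have hp2 := hp.two_le
  set F : Finset (ℕ × ℕ × ℕ) :=
    (Finset.range (p + 1) ×ˢ Finset.range (p + 1) ×ˢ Finset.range (p + 1)).filter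
      (fun t => t.1 ^ 2 + 4 * t.2.1 * t.2.2 = p) with hF
  have hset : {t : ℕ × ℕ × ℕ | t.1 ^ 2 + 4 * t.2.1 * t.2.2 = p} = ↑F := by
    ext ⟨x, y, z⟩
    simp only [Set.mem_setOf_eq, hF, Finset.coe_filter, Finset.mem_product,
      Finset.mem_range, Set.mem_setOf_eq]
    constructor
    · intro h
      obtain ⟨hx, hy, hz, _, _⟩ := zag_facts hp hmod h
      refine ⟨⟨?_, ?_, ?_⟩, h⟩ <;> nlinarith
    · exact fun h => h.2
  rw [hset, Set.ncard_coe_finset]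
  have hmemF : ∀ t ∈ F, t.1 ^ 2 + 4 * t.2.1 * t.2.2 = p := by
    intro t htm
    rw [hF] at htm
    exact (Finset.mem_filter.mp htm).2
  have hinF : ∀ t : ℕ × ℕ × ℕ, t.1 ^ 2 + 4 * t.2.1 * t.2.2 = p → t ∈ F := by
    rintro ⟨x, y, z⟩ h
    simp only at h
    obtain ⟨hx, hy, hz, _, _⟩ := zag_facts hp hmod h
    rw [hF, Finset.mem_filter, Finset.mem_product, Finset.mem_product]
    simp only [Finset.mem_range]
    exact ⟨⟨by nlinarith, by nlinarith, by nlinarith⟩, h⟩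
  have hmapF : ∀ t ∈ F, zagMap t ∈ F := fun t htm => hinF _ (zag_mem hp hmod (hmemF t htm))
  have hsplit := Finset.card_filter_add_card_filter_not
    (s := F) (p := fun t => zagMap t = t)
  have hfix : F.filter (fun t => zagMap t = t) = {(1, 1, (p - 1) / 4)} := by
    ext t
    simp only [Finset.mem_filter, Finset.mem_singleton]
    constructor
    · rintro ⟨htm, hft⟩
      exact (zag_fixed hp hmod (hmemF t htm)).mp hft
    · rintro rfl
      have hmem : ((1 : ℕ), (1 : ℕ), (p - 1) / 4) ∈ F := by
        apply hinF
        simp only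
        norm_num
        omega
      exact ⟨hmem, (zag_fixed hp hmod (hmemF _ hmem)).mpr rfl⟩
  have heven : Even ((F.filter (fun t => ¬ zagMap t = t)).card) := by
    refine even_card_invol zagMap _ ?_ ?_ ?_
    · intro b hb
      simp only [Finset.mem_filter] at hb ⊢
      refine ⟨hmapF b hb.1, ?_⟩
      rw [zag_zag hp hmod (hmemF b hb.1)]
      exact fun he => hb.2 he.symm
    · intro b hb
      simp only [Finset.mem_filter] at hb
      exact zag_zag hp hmod (hmemF b hb.1)
    · intro b hb
      simp only [Finset.mem_filter] at hb
      exact hb.2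
  rw [hfix] at hsplit
  simp only [Finset.card_singleton] at hsplit
  obtain ⟨k, hk⟩ := heven
  exact ⟨k, by omega⟩
end

section
/- The conjugation map τ : (a₁, f₁, a₂, f₂) ↦ (f₁+f₂, a₂, f₁, a₁−a₂) is an involution on the set P₂ᵖ = {(a₁,f₁,a₂,f₂) ∈ ℕ⁴ | a₁ > a₂ > 0, f₁ > 0, f₂ > 0, a₁f₁ + a₂f₂ = p} of two-part partitions of p. -/
def P2 (p : ℕ) : Set (ℕ × ℕ × ℕ × ℕ) :=
  {t | t.1 > t.2.2.1 ∧ t.2.2.1 > 0 ∧ t.2.1 > 0 ∧ t.2.2.2 > 0 ∧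
    t.1 * t.2.1 + t.2.2.1 * t.2.2.2 = p}

def conj (t : ℕ × ℕ × ℕ × ℕ) : ℕ × ℕ × ℕ × ℕ :=
  (t.2.1 + t.2.2.2, t.2.2.1, t.2.1, t.1 - t.2.2.1)

theorem conj_involution (p : ℕ) (hp : p.Prime) :
    (∀ t ∈ P2 p, conj t ∈ P2 p) ∧ (∀ t ∈ P2 p, conj (conj t) = t) := by
  constructor
  · rintro ⟨a1, f1, a2, f2⟩ ht
    simp only [P2, conj, Set.mem_setOf_eq] at ht ⊢
    obtain ⟨h1, h2, h3, h4, h5⟩ := ht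
    refine ⟨by omega, by omega, by omega, by omega, ?_⟩
    have : a1 * f1 = f1 * a2 + f1 * (a1 - a2) := by
      rw [← Nat.mul_add, Nat.add_sub_cancel' (le_of_lt h1), Nat.mul_comm]
    nlinarith [Nat.add_mul f1 f2 a2]
  · rintro ⟨a1, f1, a2, f2⟩ ht
    simp only [P2, conj, Set.mem_setOf_eq] at ht
    obtain ⟨h1, h2, h3, h4, h5⟩ := ht
    show ((a2 + (a1 - a2), f1, a2, f1 + f2 - f1) : ℕ×ℕ×ℕ×ℕ) = (a1, f1, a2, f2)
    have : a2 + (a1 - a2) = a1 := by omega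
    have h6 : f1 + f2 - f1 = f2 := by omega
    rw [this, h6]
end

section
/- For an odd prime p, the conjugation involution τ : (a₁,f₁,a₂,f₂) ↦ (f₁+f₂, a₂, f₁, a₁−a₂) on P₂ᵖ has exactly one fixed point, namely (1 + (p−1)/2, 1, 1, (p−1)/2), i.e. the unique fixed point satisfies f₁ = 1 and f₂ = (p−1)/2. -/
theorem conj_unique_fixed_point (p : ℕ) (hp : p.Prime) (hodd : Odd p) :
    {t ∈ P2 p | conj t = t} = {(1 + (p - 1) / 2, 1, 1, (p - 1) / 2)} := by
  obtain ⟨k, hk⟩ := hodd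
  ext ⟨a1, f1, a2, f2⟩
  simp only [Set.mem_setOf_eq, Set.mem_sep_iff, Set.mem_singleton_iff, P2, conj,
    Prod.mk.injEq]
  constructor
  · rintro ⟨⟨h1, h2, h3, h4, h5⟩, e1, e2, e3, e4⟩
    have hpe : p = f1 * (f1 + 2 * f2) := by rw [← h5, ← e1, e3]; ring
    have hf1 : f1 = 1 := by
      rcases hp.eq_one_or_self_of_dvd f1 ⟨f1 + 2 * f2, hpe⟩ with h | h
      · exact h
      · exfalso; nlinarith [hp.two_le]
    subst hf1
    omega
  · rintro ⟨h1, h2, h3, h4⟩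
    have hp2 : 2 ≤ p := hp.two_le
    subst h1 h2 h3 h4
    refine ⟨⟨by omega, by omega, by omega, by omega, by omega⟩,
      by omega, rfl, rfl, by omega⟩
end

section
/- For an odd prime p, the set P₂ᵖ of two-part partitions of p has odd cardinality. -/
/-!
Conjugating Ferrers diagrams is an involution on two-part partitions of `p`. A self-conjugate
`a₁ ^ f₁ a₂ ^ f₂` has `a₂ = f₁` and `a₁ = f₁ + f₂`, so `p = a₂ (a₂ + 2 f₂)`; primality forces
`a₂ = 1`, leaving the single fixed point `p = (k + 1) * 1 + 1 * k` for `p = 2k + 1`. The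
other partitions pair off, so the count is odd.
-/

open Function Set

theorem Function.Involutive.card_modEq_card_fixedPoints {α : Type*} [Finite α] {f : α → α}
    (hf : Involutive f) : Nat.card α ≡ Nat.card (fixedPoints f) [MOD 2] := by
  classical
  have := Fintype.ofFinite α
  simp only [Nat.card_eq_fintype_card]
  exact Equiv.Perm.card_fixedPoints_modEq (f := f) (p := 2) (n := 1) (funext hf)

theorem Set.odd_ncard_of_involution {α : Type*} {s : Set α} (hs : s.Finite) {f : α → α}
    (hmaps : MapsTo f s s) (hinv : ∀ x ∈ s, f (f x) = x) {a : α}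
    (hfix : ∀ x ∈ s, f x = x ↔ x = a) (ha : a ∈ s) : Odd s.ncard := by
  have := hs.to_subtype
  have hres : Involutive (hmaps.restrict f s s) := fun x => Subtype.ext (hinv x x.2)
  have hunique : fixedPoints (hmaps.restrict f s s) = {⟨a, ha⟩} := by
    ext x
    simp [IsFixedPt, Subtype.ext_iff, hfix x x.2]
  have := hres.card_modEq_card_fixedPoints
  rw [hunique, Nat.card_coe_set_eq, Nat.card_coe_set_eq, ncard_singleton] at this
  exact Nat.odd_iff.mpr this

namespace P2

@[simp]
theorem mem_iff {n a₁ f₁ a₂ f₂ : ℕ} :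
    (a₁, f₁, a₂, f₂) ∈ P2 n ↔ a₂ < a₁ ∧ 0 < a₂ ∧ 0 < f₁ ∧ 0 < f₂ ∧ a₁ * f₁ + a₂ * f₂ = n :=
  Iff.rfl

theorem finite (n : ℕ) : (P2 n).Finite := by
  refine ((finite_Iic n).prod ((finite_Iic n).prod ((finite_Iic n).prod (finite_Iic n)))).subset ?_
  rintro ⟨a₁, f₁, a₂, f₂⟩ ht
  obtain ⟨h₁, ha₂, hf₁, hf₂, rfl⟩ := mem_iff.mp ht
  simp only [mem_prod, mem_Iic]
  refine ⟨?_, ?_, ?_, ?_⟩ <;> nlinarith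

/-- Conjugation of the Ferrers diagram of `a₁ ^ f₁ a₂ ^ f₂`: its columns have lengths
`f₁ + f₂` (taken `a₂` times) and `f₁` (taken `a₁ - a₂` times). -/
def conj (t : ℕ × ℕ × ℕ × ℕ) : ℕ × ℕ × ℕ × ℕ :=
  (t.2.1 + t.2.2.2, t.2.2.1, t.2.1, t.1 - t.2.2.1)

theorem conj_mem {n : ℕ} {t : ℕ × ℕ × ℕ × ℕ} (ht : t ∈ P2 n) : conj t ∈ P2 n := by
  obtain ⟨a₁, f₁, a₂, f₂⟩ := t
  obtain ⟨h₁, ha₂, hf₁, hf₂, rfl⟩ := mem_iff.mp ht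
  obtain ⟨c, rfl⟩ := Nat.exists_eq_add_of_lt h₁
  simp only [conj, mem_iff]
  refine ⟨by omega, hf₁, ha₂, by omega, ?_⟩
  rw [Nat.add_assoc, Nat.add_sub_cancel_left]
  ring

theorem conj_conj {n : ℕ} {t : ℕ × ℕ × ℕ × ℕ} (ht : t ∈ P2 n) : conj (conj t) = t := by
  obtain ⟨a₁, f₁, a₂, f₂⟩ := t
  obtain ⟨h₁, -⟩ := mem_iff.mp ht
  simp only [conj, Prod.mk.injEq, true_and]
  omega

theorem conj_eq_self_iff {k : ℕ} (hp : (2 * k + 1).Prime) {t : ℕ × ℕ × ℕ × ℕ}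
    (ht : t ∈ P2 (2 * k + 1)) : conj t = t ↔ t = (k + 1, 1, 1, k) := by
  obtain ⟨a₁, f₁, a₂, f₂⟩ := t
  obtain ⟨h₁, ha₂, hf₁, hf₂, hsum⟩ := mem_iff.mp ht
  simp only [conj, Prod.mk.injEq]
  constructor
  · rintro ⟨rfl, rfl, -, -⟩
    have hfactor : a₂ * (a₂ + 2 * f₂) = 2 * k + 1 := by rw [← hsum]; ring
    rw [← hfactor, Nat.prime_mul_iff] at hp
    have ha₂ : a₂ = 1 := by omega
    subst ha₂
    omega
  · rintro ⟨rfl, rfl, rfl, rfl⟩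
    omega

theorem center_mem {k : ℕ} (hk : 0 < k) : (k + 1, 1, 1, k) ∈ P2 (2 * k + 1) := by
  simp only [mem_iff]
  omega

end P2

theorem P2_odd_card (p : ℕ) (hp : p.Prime) (hodd : Odd p) :
    Odd (P2 p).ncard := by
  obtain ⟨k, rfl⟩ := hodd
  have hk : 0 < k := Nat.pos_of_ne_zero (by rintro rfl; exact Nat.not_prime_one hp)
  exact odd_ncard_of_involution (P2.finite _) (fun _ => P2.conj_mem) (fun _ => P2.conj_conj)
    (fun _ => P2.conj_eq_self_iff hp) (P2.center_mem hk)
end
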